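/- Let ν > 0, c > 0, f_0 > 0, and let a(t) be a solution of the viscous dyadic model on [0, ∞) with a_j(0) ≥ 0 for all j. Then a(t) satisfies the energy inequality |a(t)|² + 2ν ∫_{t₀}^{t} ‖a(τ)‖²_{H¹} dτ ≤ |a(t₀)|² + 2 ∫_{t₀}^{t} f_0 a_0(τ) dτ for all 0 ≤ t₀ ≤ t. -/

import Mathlib

/-!
Each equation is linear in `a_j` with the nonnegative source `f_j + 2^{c(j-1)} a_{j-1}²`, so an
integrating factor shows that nonnegative data stay nonnegative. For nonnegative states the energy
of the shells `j ≤ N` changes by the work of the force minus the viscous dissipation minus the flux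
`2^{cN} a_N² a_{N+1} ≥ 0` into shell `N + 1`. Hence every truncated energy obeys the inequality, and
letting `N → ∞` (the dissipation integrals converge monotonically) gives it for `a`.
-/

open Filter MeasureTheory intervalIntegral

/-- Right-hand side of the dyadic model ODE for the `j`-th component:
`d/dt a_j = f_j - ν 2^{2j} a_j + 2^{c(j-1)} a_{j-1}² - 2^{cj} a_j a_{j+1}`,
with the conventions `a_{-1} = 0`, `f_0 = f₀`, `f_j = 0` for `j ≥ 1`. -/
noncomputable def dyadicRHS (ν c f₀ : ℝ) (a : ℕ → ℝ) (j : ℕ) : ℝ :=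
  (if j = 0 then f₀ else 0) - ν * (2 : ℝ) ^ (2 * j) * a j
    + (if j = 0 then 0 else (2 : ℝ) ^ (c * ((j : ℝ) - 1)) * a (j - 1) ^ 2)
    - (2 : ℝ) ^ (c * (j : ℝ)) * a j * a (j + 1)

/-- A solution of the dyadic model on `[0, ∞)`: an `l²`-valued function whose
components are differentiable on `[0, ∞)` and satisfy the dyadic system. -/
def IsSolution (ν c f₀ : ℝ) (a : ℝ → ℕ → ℝ) : Prop :=
  (∀ t : ℝ, 0 ≤ t → Summable (fun j : ℕ => a t j ^ 2)) ∧
  ∀ j : ℕ, ∀ t : ℝ, 0 ≤ t →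
    HasDerivWithinAt (fun s : ℝ => a s j) (dyadicRHS ν c f₀ (a t) j) (Set.Ici 0) t

/-- A fixed point of the dyadic model: an `l²` sequence `α` with
`ν 2^{2j} α_j - 2^{c(j-1)} α_{j-1}² + 2^{cj} α_j α_{j+1} = f_j` for all `j ≥ 0`. -/
def IsFixedPoint (ν c f₀ : ℝ) (α : ℕ → ℝ) : Prop :=
  (Summable fun j : ℕ => α j ^ 2) ∧
  ∀ j : ℕ, dyadicRHS ν c f₀ α j = 0

open Set

theorem sum_range_succ_mul_dyadicRHS (ν c f₀ : ℝ) (α : ℕ → ℝ) (N : ℕ) :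
    ∑ j ∈ Finset.range (N + 1), α j * dyadicRHS ν c f₀ α j
      = f₀ * α 0 - ν * ∑ j ∈ Finset.range (N + 1), (2 : ℝ) ^ (2 * j) * α j ^ 2
        - (2 : ℝ) ^ (c * (N : ℝ)) * α N ^ 2 * α (N + 1) := by
  unfold dyadicRHS
  induction N with
  | zero =>
    simp only [zero_add, Finset.range_one, Finset.sum_singleton, ↓reduceIte, mul_zero, pow_zero,
      mul_one, add_zero, CharP.cast_eq_zero, Real.rpow_zero, one_mul]
    ring
  | succ n ih =>
    rw [Finset.sum_range_succ, ih,
      Finset.sum_range_succ (fun j => (2 : ℝ) ^ (2 * j) * α j ^ 2) (n + 1)]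
    have hcast : ((n + 1 : ℕ) : ℝ) - 1 = n := by push_cast; ring
    simp only [if_neg (Nat.succ_ne_zero n), hcast, Nat.add_sub_cancel]
    push_cast
    ring

theorem sum_range_mul_dyadicRHS_le (ν c : ℝ) {f₀ : ℝ} (hf : 0 ≤ f₀) {α : ℕ → ℝ}
    (hα : ∀ j, 0 ≤ α j) (N : ℕ) :
    ∑ j ∈ Finset.range N, α j * dyadicRHS ν c f₀ α j
      ≤ f₀ * α 0 - ν * ∑ j ∈ Finset.range N, (2 : ℝ) ^ (2 * j) * α j ^ 2 := by
  cases N with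
  | zero => simpa using mul_nonneg hf (hα 0)
  | succ N =>
    rw [sum_range_succ_mul_dyadicRHS]
    have hflux : 0 ≤ (2 : ℝ) ^ (c * (N : ℝ)) * α N ^ 2 * α (N + 1) := by
      have := hα (N + 1)
      positivity
    linarith

theorem nonneg_of_hasDerivWithinAt_add_mul_nonneg {y y' k : ℝ → ℝ} {s₀ : ℝ}
    (hk : ContinuousOn k (Ici s₀))
    (hy : ∀ t ∈ Ici s₀, HasDerivWithinAt y (y' t) (Ici s₀) t)
    (hy' : ∀ t ∈ Ici s₀, 0 ≤ y' t + k t * y t) (h₀ : 0 ≤ y s₀) {t : ℝ} (ht : s₀ ≤ t) :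
    0 ≤ y t := by
  set K : ℝ → ℝ := fun u => k (max u s₀)
  have hK : Continuous K :=
    hk.comp_continuous (continuous_id.max continuous_const) fun u => le_max_right u s₀
  set F : ℝ → ℝ := fun u => ∫ τ in s₀..u, K τ
  have hF : ∀ u, HasDerivAt F (K u) u := fun u =>
    integral_hasDerivAt_right (hK.intervalIntegrable _ _)
      (hK.stronglyMeasurableAtFilter _ _) hK.continuousAt
  -- `exp F` is an integrating factor: `(exp F * y)' = exp F * (y' + k y) ≥ 0`.
  have hmono : MonotoneOn (fun u => Real.exp (F u) * y u) (Ici s₀) := by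
    refine monotoneOn_of_hasDerivWithinAt_nonneg (convex_Ici s₀)
      (f' := fun u => Real.exp (F u) * (y' u + k u * y u)) ?_ ?_ ?_
    · exact (Real.continuous_exp.comp (continuous_iff_continuousAt.2 fun u =>
        (hF u).continuousAt)).continuousOn.mul fun u hu => (hy u hu).continuousWithinAt
    · intro u hu
      rw [interior_Ici] at hu ⊢
      have hu : s₀ ≤ u := le_of_lt hu
      have hKu : K u = k u := by simp only [K, max_eq_left hu]
      exact (((hF u).exp.hasDerivWithinAt).mul ((hy u hu).mono Ioi_subset_Ici_self)).congr_deriv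
        (by rw [hKu]; ring)
    · intro u hu
      rw [interior_Ici, mem_Ioi] at hu
      exact mul_nonneg (Real.exp_pos _).le (hy' u hu.le)
  have hle := hmono self_mem_Ici ht ht
  simp only [F, integral_same, Real.exp_zero, one_mul] at hle
  exact (mul_nonneg_iff_of_pos_left (Real.exp_pos _)).mp (h₀.trans hle)

theorem integral_tsum_of_nonneg {α ι : Type*} [MeasurableSpace α] [Countable ι]
    {μ : Measure α} {f : ι → α → ℝ} (hf : ∀ i, Integrable (f i) μ) (hf₀ : ∀ i, 0 ≤ᵐ[μ] f i)
    (hsum : Summable fun i => ∫ x, f i x ∂μ) :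
    ∫ x, ∑' i, f i x ∂μ = ∑' i, ∫ x, f i x ∂μ := by
  refine (integral_tsum_of_summable_integral_norm hf (hsum.congr fun i => ?_)).symm
  exact integral_congr_ae <| (hf₀ i).mono fun x hx => (Real.norm_of_nonneg hx).symm

theorem summable_of_sum_range_add_mul_le {x d : ℕ → ℝ} {r R : ℝ} (hr : 0 < r)
    (hx₀ : ∀ j, 0 ≤ x j) (hd₀ : ∀ j, 0 ≤ d j)
    (h : ∀ N, ∑ j ∈ Finset.range N, (x j + r * d j) ≤ R) : Summable d := by
  refine summable_of_sum_range_le (c := R / r) hd₀ fun N => (le_div_iff₀' hr).2 ?_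
  have hsum := h N
  rw [Finset.sum_add_distrib, ← Finset.mul_sum] at hsum
  linarith [Finset.sum_nonneg fun j (_ : j ∈ Finset.range N) => hx₀ j]

theorem tsum_add_mul_tsum_le_of_sum_range_le {x d : ℕ → ℝ} {r R : ℝ} (hr : 0 < r)
    (hx : Summable x) (hx₀ : ∀ j, 0 ≤ x j) (hd₀ : ∀ j, 0 ≤ d j)
    (h : ∀ N, ∑ j ∈ Finset.range N, (x j + r * d j) ≤ R) :
    ∑' j, x j + r * ∑' j, d j ≤ R := by
  rw [← tsum_mul_left, ← hx.tsum_add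
    ((summable_of_sum_range_add_mul_le hr hx₀ hd₀ h).mul_left r)]
  exact Real.tsum_le_of_sum_range_le
    (fun j => add_nonneg (hx₀ j) (mul_nonneg hr.le (hd₀ j))) h

namespace IsSolution

variable {ν c f₀ : ℝ} {a : ℝ → ℕ → ℝ}

theorem continuousOn (ha : IsSolution ν c f₀ a) (j : ℕ) :
    ContinuousOn (fun s => a s j) (Ici 0) :=
  fun t ht => (ha.2 j t ht).continuousWithinAt

theorem nonneg (hf : 0 ≤ f₀) (ha : IsSolution ν c f₀ a) (hpos : ∀ j, 0 ≤ a 0 j)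
    {t : ℝ} (ht : 0 ≤ t) (j : ℕ) : 0 ≤ a t j := by
  refine nonneg_of_hasDerivWithinAt_add_mul_nonneg
    (k := fun s => ν * 2 ^ (2 * j) + (2 : ℝ) ^ (c * (j : ℝ)) * a s (j + 1))
    (continuousOn_const.add (continuousOn_const.mul (ha.continuousOn (j + 1))))
    (ha.2 j) (fun s _ => ?_) (hpos j) ht
  have hsplit : dyadicRHS ν c f₀ (a s) j
      + (ν * 2 ^ (2 * j) + (2 : ℝ) ^ (c * (j : ℝ)) * a s (j + 1)) * a s j
      = (if j = 0 then f₀ else 0)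
        + (if j = 0 then 0 else (2 : ℝ) ^ (c * ((j : ℝ) - 1)) * a s (j - 1) ^ 2) := by
    unfold dyadicRHS
    ring
  rw [hsplit]
  split_ifs <;> positivity

theorem hasDerivWithinAt_sum_range_sq (ha : IsSolution ν c f₀ a) (N : ℕ) {t : ℝ}
    (ht : 0 ≤ t) :
    HasDerivWithinAt (fun s => ∑ j ∈ Finset.range N, a s j ^ 2)
      (2 * ∑ j ∈ Finset.range N, a t j * dyadicRHS ν c f₀ (a t) j) (Ici 0) t := by
  rw [Finset.mul_sum]
  refine HasDerivWithinAt.fun_sum fun j _ => ?_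
  exact ((ha.2 j t ht).fun_pow 2).congr_deriv (by rw [Nat.add_one_sub_one, pow_one]; push_cast; ring)

theorem sum_range_energy_le (hf : 0 ≤ f₀) (ha : IsSolution ν c f₀ a)
    (hpos : ∀ j, 0 ≤ a 0 j) (N : ℕ) {t₀ t : ℝ} (ht₀ : 0 ≤ t₀) (ht₀t : t₀ ≤ t) :
    (∑ j ∈ Finset.range N, a t j ^ 2)
        + 2 * ν * ∫ τ in t₀..t, ∑ j ∈ Finset.range N, (2 : ℝ) ^ (2 * j) * a τ j ^ 2
      ≤ (∑ j ∈ Finset.range N, a t₀ j ^ 2) + 2 * ∫ τ in t₀..t, f₀ * a τ 0 := by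
  have hsub : Icc t₀ t ⊆ Ici 0 := fun τ hτ => ht₀.trans hτ.1
  have hcont : ∀ j, ContinuousOn (fun s => a s j) (Icc t₀ t) :=
    fun j => (ha.continuousOn j).mono hsub
  have hdiss : ContinuousOn (fun τ => ∑ j ∈ Finset.range N, (2 : ℝ) ^ (2 * j) * a τ j ^ 2)
      (Icc t₀ t) :=
    continuousOn_finsetSum _ fun j _ => continuousOn_const.mul ((hcont j).pow 2)
  have hforce : ContinuousOn (fun τ => f₀ * a τ 0) (Icc t₀ t) :=
    continuousOn_const.mul (hcont 0)
  have henergy := sub_le_integral_of_hasDeriv_right_of_le ht₀t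
    (φ := fun τ => 2 * (f₀ * a τ 0)
      - 2 * ν * ∑ j ∈ Finset.range N, (2 : ℝ) ^ (2 * j) * a τ j ^ 2)
    (continuousOn_finsetSum _ fun j _ => (hcont j).pow 2)
    (fun τ hτ => (ha.hasDerivWithinAt_sum_range_sq N (ht₀.trans hτ.1.le)).mono
      fun s hs => ht₀.trans (hτ.1.trans hs).le)
    ((continuousOn_const.mul hforce).sub (continuousOn_const.mul hdiss)).integrableOn_Icc
    (fun τ hτ => by
      have := sum_range_mul_dyadicRHS_le ν c hf (ha.nonneg hf hpos (ht₀.trans hτ.1.le)) N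
      linarith)
  rw [← uIcc_of_le ht₀t] at hdiss hforce
  rw [integral_sub (hforce.intervalIntegrable.const_mul 2)
    (hdiss.intervalIntegrable.const_mul _), intervalIntegral.integral_const_mul 2,
    intervalIntegral.integral_const_mul (2 * ν)] at henergy
  simp only [Pi.pow_apply] at henergy
  linarith

end IsSolution

theorem stmt_11_general (ν c f₀ : ℝ) (hν : 0 < ν) (hf : 0 < f₀)
    (a : ℝ → ℕ → ℝ) (ha : IsSolution ν c f₀ a)
    (hpos : ∀ j : ℕ, 0 ≤ a 0 j) :
    ∀ t₀ t : ℝ, 0 ≤ t₀ → t₀ ≤ t →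
      (∑' j : ℕ, a t j ^ 2)
          + 2 * ν * ∫ τ in t₀..t, ∑' j : ℕ, (2 : ℝ) ^ (2 * j) * a τ j ^ 2
        ≤ (∑' j : ℕ, a t₀ j ^ 2) + 2 * ∫ τ in t₀..t, f₀ * a τ 0 := by
  intro t₀ t ht₀ ht₀t
  set D : ℕ → ℝ := fun j => ∫ τ in t₀..t, (2 : ℝ) ^ (2 * j) * a τ j ^ 2
  have hint : ∀ j, IntervalIntegrable (fun τ => (2 : ℝ) ^ (2 * j) * a τ j ^ 2) volume t₀ t :=
    fun j => (continuousOn_const.mul (((ha.continuousOn j).mono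
      fun τ hτ => ht₀.trans (uIcc_of_le ht₀t ▸ hτ).1).pow 2)).intervalIntegrable
  have hD₀ : ∀ j, 0 ≤ D j := fun j => integral_nonneg ht₀t fun τ _ => by positivity
  have hpartial : ∀ N, ∑ j ∈ Finset.range N, (a t j ^ 2 + 2 * ν * D j)
      ≤ (∑' j : ℕ, a t₀ j ^ 2) + 2 * ∫ τ in t₀..t, f₀ * a τ 0 := fun N => by
    rw [Finset.sum_add_distrib, ← Finset.mul_sum,
      ← intervalIntegral.integral_finsetSum fun j _ => hint j]
    refine (ha.sum_range_energy_le hf.le hpos N ht₀ ht₀t).trans ?_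
    exact add_le_add_left ((ha.1 t₀ ht₀).sum_le_tsum _ fun j _ => sq_nonneg _) _
  have hν₂ : 0 < 2 * ν := by positivity
  have hdiss : (∫ τ in t₀..t, ∑' j : ℕ, (2 : ℝ) ^ (2 * j) * a τ j ^ 2) = ∑' j, D j := by
    have hsumD := summable_of_sum_range_add_mul_le hν₂ (fun j => sq_nonneg _) hD₀ hpartial
    simp only [D, integral_of_le ht₀t] at hsumD ⊢
    exact integral_tsum_of_nonneg (fun j => (hint j).1)
      (fun j => ae_of_all _ fun τ => by positivity) hsumD
  rw [hdiss]
  exact tsum_add_mul_tsum_le_of_sum_range_le hν₂ (ha.1 t (ht₀.trans ht₀t))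
    (fun j => sq_nonneg _) hD₀ hpartial

theorem stmt_11 (ν c f₀ : ℝ) (hν : 0 < ν) (hc : 0 < c) (hf : 0 < f₀)
    (a : ℝ → ℕ → ℝ) (ha : IsSolution ν c f₀ a)
    (hpos : ∀ j : ℕ, 0 ≤ a 0 j) :
    ∀ t₀ t : ℝ, 0 ≤ t₀ → t₀ ≤ t →
      (∑' j : ℕ, a t j ^ 2)
          + 2 * ν * ∫ τ in t₀..t, ∑' j : ℕ, (2 : ℝ) ^ (2 * j) * a τ j ^ 2
        ≤ (∑' j : ℕ, a t₀ j ^ 2) + 2 * ∫ τ in t₀..t, f₀ * a τ 0 :=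
  stmt_11_general ν c f₀ hν hf a ha hpos
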